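/- arXiv:2411.17552 — 6 statements merged into one kernel-verified Lean document; each statement's English description precedes it below -/
import Mathlib

section
/- Let α : ℝ → ℝ be locally Lipschitz, monotonically nondecreasing with α(0) = 0, and let h : ℝ → ℝ be differentiable on [0,∞) with h(0) ≥ 0 and h'(t) ≥ −α(h(t)) for all t ≥ 0. Then h(t) ≥ 0 for all t ≥ 0. -/
/-! Wherever `h < 0`, monotonicity of `α` gives `h' ≥ -α(h) ≥ -α(0) = 0`. So if `h t < 0`, then
from the last time `s ≤ t` with `h s ≥ 0` the function is monotone up to `t`, and
`h t ≥ h s ≥ 0`. -/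

open Set

theorem nonneg_of_deriv_nonneg_of_neg {f : ℝ → ℝ} {a b : ℝ} (hab : a ≤ b)
    (hcont : ContinuousOn f (Icc a b)) (hdiff : DifferentiableOn ℝ f (Ioo a b))
    (ha : 0 ≤ f a) (hderiv : ∀ x ∈ Ioo a b, f x < 0 → 0 ≤ deriv f x) : 0 ≤ f b := by
  by_contra! hb
  have hclosed : IsClosed (Icc a b ∩ f ⁻¹' Ici 0) :=
    hcont.preimage_isClosed_of_isClosed isClosed_Icc isClosed_Ici
  obtain ⟨s, ⟨⟨has, hsb_le⟩, hs⟩, hlast⟩ :=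
    (isCompact_Icc.of_isClosed_subset hclosed inter_subset_left).exists_isGreatest
      ⟨a, left_mem_Icc.2 hab, ha⟩
  have hsb : s < b := hsb_le.lt_of_ne (by rintro rfl; exact hb.not_ge hs)
  have hneg : ∀ x ∈ Ioc s b, f x < 0 := fun x hx =>
    not_le.1 fun hfx => hx.1.not_ge (hlast ⟨⟨has.trans hx.1.le, hx.2⟩, hfx⟩)
  have hmono : MonotoneOn f (Icc s b) := by
    refine monotoneOn_of_deriv_nonneg (convex_Icc s b) (hcont.mono (Icc_subset_Icc_left has))
      ?_ ?_ <;> rw [interior_Icc]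
    · exact hdiff.mono (Ioo_subset_Ioo_left has)
    · exact fun x hx => hderiv x ⟨has.trans_lt hx.1, hx.2⟩ (hneg x ⟨hx.1, hx.2.le⟩)
  exact hb.not_ge (hs.trans (hmono (left_mem_Icc.2 hsb.le) (right_mem_Icc.2 hsb.le) hsb.le))

theorem cbf_comparison_general (α h : ℝ → ℝ)
    (hα_mono : Monotone α) (hα0 : α 0 = 0)
    (hdiff : ∀ t ≥ (0:ℝ), DifferentiableAt ℝ h t)
    (h0 : h 0 ≥ 0)
    (hineq : ∀ t ≥ (0:ℝ), deriv h t ≥ -α (h t)) :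
    ∀ t ≥ (0:ℝ), h t ≥ 0 := by
  intro t ht
  refine nonneg_of_deriv_nonneg_of_neg ht
    (fun x hx => (hdiff x hx.1).continuousAt.continuousWithinAt)
    (fun x hx => (hdiff x hx.1.le).differentiableWithinAt) h0 fun x hx hneg => ?_
  have hα_neg : α (h x) ≤ 0 := hα0 ▸ hα_mono hneg.le
  linarith [hineq x hx.1.le]

/-- Scalar CBF comparison lemma: if `h(0) ≥ 0` and `h'(t) ≥ -α(h(t))` for all `t ≥ 0`,
with `α` locally Lipschitz, nondecreasing and `α 0 = 0`, then `h(t) ≥ 0` for all `t ≥ 0`. -/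
theorem cbf_comparison (α h : ℝ → ℝ)
    (hα_lip : LocallyLipschitz α) (hα_mono : Monotone α) (hα0 : α 0 = 0)
    (hdiff : ∀ t ≥ (0:ℝ), DifferentiableAt ℝ h t)
    (h0 : h 0 ≥ 0)
    (hineq : ∀ t ≥ (0:ℝ), deriv h t ≥ -α (h t)) :
    ∀ t ≥ (0:ℝ), h t ≥ 0 :=
  cbf_comparison_general α h hα_mono hα0 hdiff h0 hineq
end

section
/- Let α : ℝ → ℝ be locally Lipschitz, monotonically nondecreasing with α(0) = 0, let ι > 0, and let h : ℝ → ℝ be twice differentiable on [0,∞) with h(0) ≥ 0, h'(0) + ι·h(0) ≥ 0, and h''(t) + ι·h'(t) ≥ −α(h'(t) + ι·h(t)) for all t ≥ 0. Then h'(t) + ι·h(t) ≥ 0 and h(t) ≥ 0 for all t ≥ 0. -/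
open Filter Topology

theorem nonneg_of_deriv_nonneg_of_neg_s1 {f : ℝ → ℝ} {a : ℝ}
    (hf : ∀ x ≥ a, DifferentiableAt ℝ f x) (ha : 0 ≤ f a)
    (hderiv : ∀ x ≥ a, f x < 0 → 0 ≤ deriv f x) :
    ∀ x ≥ a, 0 ≤ f x := by
  intro t ht
  -- `-f` stays below each strictly increasing barrier `ε * (1 + (x - a))`; then let `ε → 0`.
  have hbarrier : ∀ ε > 0, -f t ≤ ε * (1 + (t - a)) := by
    intro ε hε
    refine image_le_of_deriv_right_lt_deriv_boundary (f := fun x => -f x)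
      (f' := fun x => -deriv f x) (B := fun x => ε * (1 + (x - a))) (B' := fun _ => ε)
      (fun x hx => (hf x hx.1).continuousAt.neg.continuousWithinAt)
      (fun x hx => (hf x hx.1).hasDerivAt.neg.hasDerivWithinAt)
      (by simp only [sub_self, add_zero, mul_one]; linarith)
      (fun x => by simpa using (((hasDerivAt_id x).sub_const a).const_add 1).const_mul ε)
      ?_ ⟨ht, le_rfl⟩
    intro x hx hfx
    have hfx_neg : f x < 0 := by nlinarith [hx.1]
    linarith [hderiv x hx.1 hfx_neg]
  have hlim : Tendsto (fun ε => ε * (1 + (t - a))) (𝓝[>] 0) (𝓝 0) :=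
    tendsto_nhdsWithin_of_tendsto_nhds ((continuous_mul_const _).tendsto' 0 0 (zero_mul _))
  have := ge_of_tendsto hlim (eventually_nhdsWithin_of_forall hbarrier)
  linarith

theorem Monotone.nonneg_of_neg_comp_le_deriv {α ψ : ℝ → ℝ} {a : ℝ} (hα : Monotone α)
    (hα0 : α 0 = 0) (hψ : ∀ t ≥ a, DifferentiableAt ℝ ψ t) (ha : 0 ≤ ψ a)
    (hcbf : ∀ t ≥ a, -α (ψ t) ≤ deriv ψ t) :
    ∀ t ≥ a, 0 ≤ ψ t :=
  nonneg_of_deriv_nonneg_of_neg_s1 hψ ha fun t ht hψt => by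
    have := hα hψt.le
    rw [hα0] at this
    linarith [hcbf t ht]

theorem nonneg_of_deriv_add_mul_nonneg {h : ℝ → ℝ} {ι a : ℝ} (hι : 0 ≤ ι)
    (hh : ∀ t ≥ a, DifferentiableAt ℝ h t) (ha : 0 ≤ h a)
    (hψ : ∀ t ≥ a, 0 ≤ deriv h t + ι * h t) :
    ∀ t ≥ a, 0 ≤ h t :=
  nonneg_of_deriv_nonneg_of_neg_s1 hh ha fun t ht hht => by nlinarith [hψ t ht]

theorem hocbf_comparison_general (α h : ℝ → ℝ) (ι : ℝ) (hι : ι > 0)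
    (hα_mono : Monotone α) (hα0 : α 0 = 0)
    (hdiff : ∀ t ≥ (0:ℝ), DifferentiableAt ℝ h t)
    (hdiff2 : ∀ t ≥ (0:ℝ), DifferentiableAt ℝ (deriv h) t)
    (h0 : h 0 ≥ 0)
    (h0' : deriv h 0 + ι * h 0 ≥ 0)
    (hineq : ∀ t ≥ (0:ℝ),
      deriv (deriv h) t + ι * deriv h t ≥ -α (deriv h t + ι * h t)) :
    ∀ t ≥ (0:ℝ), deriv h t + ι * h t ≥ 0 ∧ h t ≥ 0 := by
  set ψ : ℝ → ℝ := fun t => deriv h t + ι * h t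
  have hψ_deriv : ∀ t ≥ (0:ℝ), HasDerivAt ψ (deriv (deriv h) t + ι * deriv h t) t :=
    fun t ht => (hdiff2 t ht).hasDerivAt.add ((hdiff t ht).hasDerivAt.const_mul ι)
  have hψ_nonneg : ∀ t ≥ (0:ℝ), 0 ≤ ψ t :=
    hα_mono.nonneg_of_neg_comp_le_deriv hα0 (fun t ht => (hψ_deriv t ht).differentiableAt) h0'
      fun t ht => (hψ_deriv t ht).deriv ▸ hineq t ht
  have hh_nonneg := nonneg_of_deriv_add_mul_nonneg hι.le hdiff h0 hψ_nonneg
  exact fun t ht => ⟨hψ_nonneg t ht, hh_nonneg t ht⟩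

/-- Second-order (HOCBF, relative degree 2) comparison lemma: if `h(0) ≥ 0`,
`h'(0) + ι·h(0) ≥ 0`, and `h''(t) + ι·h'(t) ≥ -α(h'(t) + ι·h(t))` for all `t ≥ 0`,
then `h'(t) + ι·h(t) ≥ 0` and `h(t) ≥ 0` for all `t ≥ 0`. -/
theorem hocbf_comparison (α h : ℝ → ℝ) (ι : ℝ) (hι : ι > 0)
    (hα_lip : LocallyLipschitz α) (hα_mono : Monotone α) (hα0 : α 0 = 0)
    (hdiff : ∀ t ≥ (0:ℝ), DifferentiableAt ℝ h t)
    (hdiff2 : ∀ t ≥ (0:ℝ), DifferentiableAt ℝ (deriv h) t)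
    (h0 : h 0 ≥ 0)
    (h0' : deriv h 0 + ι * h 0 ≥ 0)
    (hineq : ∀ t ≥ (0:ℝ),
      deriv (deriv h) t + ι * deriv h t ≥ -α (deriv h t + ι * h t)) :
    ∀ t ≥ (0:ℝ), deriv h t + ι * h t ≥ 0 ∧ h t ≥ 0 :=
  hocbf_comparison_general α h ι hι hα_mono hα0 hdiff hdiff2 h0 h0' hineq
end

section
/- Let n, p ∈ ℕ, ζ, ζ', D, F, b, G, w₁, w₂ ∈ ℝⁿ, let Y, Ẏ : ℝᵖ → ℝⁿ be linear maps with adjoints Y*, Ẏ*, let θ, θ̂ ∈ ℝᵖ, ξ, ξ̂ ∈ ℝ, and ι, ν, η, ρ_v, ρ_a ≥ 0. If ‖θ − θ̂‖ ≤ ν, |ξ − ξ̂| ≤ η, ‖w₁‖ ≤ ρ_v, and ‖w₂‖ ≤ ρ_a, then 2‖ζ'‖² + 2⟪ζ, D + Ẏθ + ξ·b + G − w₂⟫ + 2ι·⟪ζ, F + Yθ − w₁⟫ ≥ 2⟪ζ, D⟫ + 2⟪ζ, Ẏθ̂⟫ − 2‖Ẏ*ζ‖·ν − 2‖ζ‖·ρ_a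 + 2ξ̂·⟪ζ, b⟫ − 2|⟪ζ, b⟫|·η + 2⟪ζ, G⟫ + ι·(2⟪ζ, F⟫ + 2⟪ζ, Yθ̂⟫ − 2‖Y*ζ‖·ν − 2‖ζ‖·ρ_v). -/
open scoped RealInnerProductSpace

/-! Each unknown enters the expression linearly through an inner product with `ζ`, so replacing it
by its estimate costs at most a Cauchy–Schwarz term: `⟪ζ, T θ⟫ - ⟪ζ, T θ̂⟫ = ⟪T† ζ, θ - θ̂⟫` for the
parameter, `(ξ - ξ̂)⟪ζ, b⟫` for the scalar, and `⟪ζ, w⟫ ≤ ‖ζ‖ ρ` for the obstacle motion. The term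
`2‖ζ'‖²` is simply dropped, and the `ι`-part is bounded after multiplying by `ι ≥ 0`. -/

section Robustification

variable {E F : Type*} [NormedAddCommGroup E] [InnerProductSpace ℝ E]

theorem real_inner_le_norm_mul_of_norm_le (x : E) {y : E} {ρ : ℝ} (hy : ‖y‖ ≤ ρ) :
    ⟪x, y⟫ ≤ ‖x‖ * ρ :=
  (real_inner_le_norm x y).trans (mul_le_mul_of_nonneg_left hy (norm_nonneg x))

variable [CompleteSpace E] [NormedAddCommGroup F] [InnerProductSpace ℝ F] [CompleteSpace F]

theorem inner_apply_ge_of_norm_sub_le (T : E →L[ℝ] F) (z : F) {θ θhat : E} {ν : ℝ}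
    (hθ : ‖θ - θhat‖ ≤ ν) :
    ⟪z, T θhat⟫ - ‖(ContinuousLinearMap.adjoint T) z‖ * ν ≤ ⟪z, T θ⟫ := by
  have hdiff : ⟪z, T θ⟫ - ⟪z, T θhat⟫ = ⟪(ContinuousLinearMap.adjoint T) z, θ - θhat⟫ := by
    rw [ContinuousLinearMap.adjoint_inner_left, map_sub, inner_sub_right]
  have hcs := real_inner_le_norm_mul_of_norm_le (-(ContinuousLinearMap.adjoint T) z) hθ
  rw [inner_neg_left, norm_neg] at hcs
  linarith

end Robustification

theorem mul_ge_of_abs_sub_le {ξ ξhat η : ℝ} (c : ℝ) (hξ : |ξ - ξhat| ≤ η) :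
    ξhat * c - |c| * η ≤ ξ * c := by
  have h : |(ξ - ξhat) * c| ≤ η * |c| := by
    rw [abs_mul]
    exact mul_le_mul_of_nonneg_right hξ (abs_nonneg c)
  nlinarith [neg_abs_le ((ξ - ξhat) * c)]

theorem collision_cbf_robust_bound_general (n p : ℕ)
    (ζ ζ' D F b G w₁ w₂ : EuclideanSpace ℝ (Fin n))
    (Y Ydot : EuclideanSpace ℝ (Fin p) →L[ℝ] EuclideanSpace ℝ (Fin n))
    (θ θhat : EuclideanSpace ℝ (Fin p))
    (ξ ξhat ι ν η ρv ρa : ℝ)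
    (hι : 0 ≤ ι)
    (hθ : ‖θ - θhat‖ ≤ ν) (hξ : |ξ - ξhat| ≤ η)
    (hw₁ : ‖w₁‖ ≤ ρv) (hw₂ : ‖w₂‖ ≤ ρa) :
    2 * ‖ζ'‖ ^ 2 + 2 * ⟪ζ, D + Ydot θ + ξ • b + G - w₂⟫
        + 2 * ι * ⟪ζ, F + Y θ - w₁⟫ ≥
      2 * ⟪ζ, D⟫ + 2 * ⟪ζ, Ydot θhat⟫
        - 2 * ‖(ContinuousLinearMap.adjoint Ydot) ζ‖ * ν - 2 * ‖ζ‖ * ρa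
        + 2 * ξhat * ⟪ζ, b⟫ - 2 * |⟪ζ, b⟫| * η + 2 * ⟪ζ, G⟫
        + ι * (2 * ⟪ζ, F⟫ + 2 * ⟪ζ, Y θhat⟫
          - 2 * ‖(ContinuousLinearMap.adjoint Y) ζ‖ * ν - 2 * ‖ζ‖ * ρv) := by
  have hYdot := inner_apply_ge_of_norm_sub_le Ydot ζ hθ
  have hY := inner_apply_ge_of_norm_sub_le Y ζ hθ
  have hw₁' := real_inner_le_norm_mul_of_norm_le ζ hw₁
  have hw₂' := real_inner_le_norm_mul_of_norm_le ζ hw₂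
  have hξ' := mul_ge_of_abs_sub_le ⟪ζ, b⟫ hξ
  have hιpart : ι * (⟪ζ, F⟫ + ⟪ζ, Y θhat⟫ - ‖(ContinuousLinearMap.adjoint Y) ζ‖ * ν - ‖ζ‖ * ρv)
      ≤ ι * ⟪ζ, F + Y θ - w₁⟫ := by
    rw [inner_sub_right, inner_add_right]
    exact mul_le_mul_of_nonneg_left (by linarith) hι
  simp only [inner_sub_right, inner_add_right, real_inner_smul_right] at hιpart ⊢
  linarith [sq_nonneg ‖ζ'‖]

/-- Robustification inequality for the second-order collision-avoidance CBF:
the quantity `ḧ/2 + ι·ḣ/2` of `h = ‖ζ‖² - r²` (depending on the unknown `θ`, `ξ`,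
`w₁`, `w₂`) is lower-bounded using the estimates `θ̂`, `ξ̂` and the bounds
`ν`, `η`, `ρ_v`, `ρ_a`. -/
theorem collision_cbf_robust_bound (n p : ℕ)
    (ζ ζ' D F b G w₁ w₂ : EuclideanSpace ℝ (Fin n))
    (Y Ydot : EuclideanSpace ℝ (Fin p) →L[ℝ] EuclideanSpace ℝ (Fin n))
    (θ θhat : EuclideanSpace ℝ (Fin p))
    (ξ ξhat ι ν η ρv ρa : ℝ)
    (hι : 0 ≤ ι) (hν : 0 ≤ ν) (hη : 0 ≤ η) (hρv : 0 ≤ ρv) (hρa : 0 ≤ ρa)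
    (hθ : ‖θ - θhat‖ ≤ ν) (hξ : |ξ - ξhat| ≤ η)
    (hw₁ : ‖w₁‖ ≤ ρv) (hw₂ : ‖w₂‖ ≤ ρa) :
    2 * ‖ζ'‖ ^ 2 + 2 * ⟪ζ, D + Ydot θ + ξ • b + G - w₂⟫
        + 2 * ι * ⟪ζ, F + Y θ - w₁⟫ ≥
      2 * ⟪ζ, D⟫ + 2 * ⟪ζ, Ydot θhat⟫
        - 2 * ‖(ContinuousLinearMap.adjoint Ydot) ζ‖ * ν - 2 * ‖ζ‖ * ρa
        + 2 * ξhat * ⟪ζ, b⟫ - 2 * |⟪ζ, b⟫| * η + 2 * ⟪ζ, G⟫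
        + ι * (2 * ⟪ζ, F⟫ + 2 * ⟪ζ, Y θhat⟫
          - 2 * ‖(ContinuousLinearMap.adjoint Y) ζ‖ * ν - 2 * ‖ζ‖ * ρv) :=
  collision_cbf_robust_bound_general n p ζ ζ' D F b G w₁ w₂ Y Ydot θ θhat ξ ξhat ι ν η ρv ρa hι hθ
    hξ hw₁ hw₂
end

section
/- Let n, m, p ∈ ℕ, constants c, ℓ, ε > 0, and bounds ν, η, ρ_v ≥ 0; define κ(ζ) = c + 1/((‖ζ‖² − ℓ²)² + ε) and, along trajectories, D(t) = (‖ζ(t)‖² − ℓ²)² + ε and a(t) = −8·κ(ζ(t))·(‖ζ(t)‖² − ℓ²)/D(t)². Let α : ℝ → ℝ be locally Lipschitz, nondecreasing, with α(0) = 0. Suppose ζ : ℝ → ℝⁿ and u : ℝ → ℝᵐ are differentiable on [0,∞) and there are functions F, w : ℝ → ℝⁿ, Y : ℝ → (ℝᵖ → ℝⁿ linear), Z : ℝ → ℝᵐ, v : ℝ → ℝᵐ, θ̂ : ℝ → ℝᵖ, ξ̂ : ℝ → ℝ and constants θ ∈ ℝᵖ, ξ ∈ ℝ such that for all t ≥ 0: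 ζ'(t) = F(t) + Y(t)θ − w(t), u'(t) = v(t) + ξ·Z(t), ‖θ − θ̂(t)‖ ≤ ν, |ξ − ξ̂(t)| ≤ η, ‖w(t)‖ ≤ ρ_v, and a(t)·⟪ζ(t), F(t) + Y(t)θ̂(t)⟫ − |a(t)|·(‖Y(t)*ζ(t)‖·ν + ‖ζ(t)‖·ρ_v) − 2⟪u(t), v(t)⟫ − 2ξ̂(t)·⟪u(t), Z(t)⟫ − 2|⟪u(t), Z(t)⟫|·η + α(κ(ζ(t))² − ‖u(t)‖²) ≥ 0. If κ(ζ(0))² − ‖u(0)‖² ≥ 0, then ‖u(t)‖ ≤ κ(ζ(t)) for all t ≥ 0. -/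
/-! The CBF `h = κ(ζ)² - ‖u‖²` satisfies `ḣ + α(h) ≥ 0` along the trajectory: its derivative is
`a·⟪ζ, F + Yθ - w⟫ - 2⟪u, v + ξZ⟫`, and the admissibility condition bounds this from below once
the unknown `θ`, `ξ`, `w` are replaced by the estimates and the worst-case errors `ν`, `η`, `ρ_v`
(Cauchy–Schwarz, with `⟪ζ, Y d⟫ = ⟪Y* ζ, d⟫`). Since `α ≤ 0` on `(-∞, 0]`, `h` cannot decrease while
negative, so starting from `h(0) ≥ 0` it stays nonnegative. -/

open scoped RealInnerProductSpace

/-- The adaptive input bound `κ(ζ) = c + 1/((‖ζ‖² - ℓ²)² + ε)`. -/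
noncomputable def kappa (n : ℕ) (c ℓ ε : ℝ) (z : EuclideanSpace ℝ (Fin n)) : ℝ :=
  c + 1 / ((‖z‖ ^ 2 - ℓ ^ 2) ^ 2 + ε)

open Set

theorem nonneg_of_hasDerivAt_nonneg_of_neg {h h' : ℝ → ℝ} {a : ℝ}
    (hd : ∀ t ≥ a, HasDerivAt h (h' t) t) (hneg : ∀ t ≥ a, h t < 0 → 0 ≤ h' t)
    (ha : 0 ≤ h a) : ∀ t ≥ a, 0 ≤ h t := by
  intro t₁ ht₁
  by_contra! ht₁neg
  set S : Set ℝ := Icc a t₁ ∩ h ⁻¹' Ici 0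
  have hS_closed : IsClosed S :=
    ContinuousOn.preimage_isClosed_of_isClosed
      (fun x hx => (hd x hx.1).continuousAt.continuousWithinAt) isClosed_Icc isClosed_Ici
  have hS_bdd : BddAbove S := ⟨t₁, fun x hx => hx.1.2⟩
  -- `s` is the last time before `t₁` at which `h` is nonnegative
  set s := sSup S
  have hsS : s ∈ S := hS_closed.csSup_mem ⟨a, ⟨le_rfl, ht₁⟩, ha⟩ hS_bdd
  have hs_nonneg : 0 ≤ h s := hsS.2
  have hs_lt : s < t₁ := hsS.1.2.lt_of_ne fun hst => (hst ▸ hs_nonneg).not_gt ht₁neg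
  have hneg_after : ∀ x ∈ Ioo s t₁, h x < 0 := fun x hx => by
    by_contra! hx0
    exact (le_csSup hS_bdd ⟨⟨hsS.1.1.trans hx.1.le, hx.2.le⟩, hx0⟩).not_gt hx.1
  have hmono : MonotoneOn h (Icc s t₁) := by
    refine monotoneOn_of_hasDerivWithinAt_nonneg (convex_Icc s t₁)
      (fun x hx => (hd x (hsS.1.1.trans hx.1)).continuousAt.continuousWithinAt)
      (fun x hx => (hd x (hsS.1.1.trans (interior_subset hx).1)).hasDerivWithinAt) ?_
    rw [interior_Icc]
    exact fun x hx => hneg x (hsS.1.1.trans hx.1.le) (hneg_after x hx)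
  exact (hs_nonneg.trans (hmono ⟨le_rfl, hs_lt.le⟩ ⟨hs_lt.le, le_rfl⟩ hs_lt.le)).not_gt ht₁neg

theorem nonneg_of_hasDerivAt_add_comp_nonneg {α h h' : ℝ → ℝ} {a : ℝ} (hα_mono : Monotone α)
    (hα0 : α 0 = 0) (hd : ∀ t ≥ a, HasDerivAt h (h' t) t)
    (hbarrier : ∀ t ≥ a, 0 ≤ h' t + α (h t)) (ha : 0 ≤ h a) : ∀ t ≥ a, 0 ≤ h t :=
  nonneg_of_hasDerivAt_nonneg_of_neg hd
    (fun t ht hlt => by linarith [hbarrier t ht, hα_mono hlt.le]) ha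

section Kappa

variable {n : ℕ} {c ℓ ε : ℝ}

theorem kappa_pos (hc : 0 ≤ c) (hε : 0 < ε) (z : EuclideanSpace ℝ (Fin n)) :
    0 < kappa n c ℓ ε z := by
  unfold kappa
  positivity

theorem HasDerivAt.kappa_sq {ζ : ℝ → EuclideanSpace ℝ (Fin n)} {ζ' : EuclideanSpace ℝ (Fin n)}
    {t : ℝ} (hζ : HasDerivAt ζ ζ' t) (hε : 0 < ε) :
    HasDerivAt (fun s => kappa n c ℓ ε (ζ s) ^ 2)
      (-8 * kappa n c ℓ ε (ζ t) * (‖ζ t‖ ^ 2 - ℓ ^ 2) /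
        ((‖ζ t‖ ^ 2 - ℓ ^ 2) ^ 2 + ε) ^ 2 * ⟪ζ t, ζ'⟫) t := by
  have hD : (‖ζ t‖ ^ 2 - ℓ ^ 2) ^ 2 + ε ≠ 0 := by positivity
  simp only [kappa, one_div]
  refine ((((hζ.norm_sq.sub_const (ℓ ^ 2)).fun_pow 2).add_const ε).fun_inv hD).const_add c
    |>.fun_pow 2 |>.congr_deriv ?_
  push_cast
  ring

end Kappa

section RobustBounds

variable {E P U : Type*} [NormedAddCommGroup E] [InnerProductSpace ℝ E] [CompleteSpace E]
  [NormedAddCommGroup P] [InnerProductSpace ℝ P] [CompleteSpace P]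
  [NormedAddCommGroup U] [InnerProductSpace ℝ U]

theorem robust_state_term_le (a : ℝ) (z f w : E) (Y : P →L[ℝ] E) {θ θhat : P} {ν ρ : ℝ}
    (hθ : ‖θ - θhat‖ ≤ ν) (hw : ‖w‖ ≤ ρ) :
    a * ⟪z, f + Y θhat⟫ - |a| * (‖Y.adjoint z‖ * ν + ‖z‖ * ρ) ≤ a * ⟪z, f + Y θ - w⟫ := by
  have hY : |a * ⟪Y.adjoint z, θ - θhat⟫| ≤ |a| * (‖Y.adjoint z‖ * ν) := by
    rw [abs_mul]
    gcongr
    exact (abs_real_inner_le_norm _ _).trans (by gcongr)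
  have hW : |a * ⟪z, w⟫| ≤ |a| * (‖z‖ * ρ) := by
    rw [abs_mul]
    gcongr
    exact (abs_real_inner_le_norm _ _).trans (by gcongr)
  have hsplit : a * ⟪z, f + Y θ - w⟫ =
      a * ⟪z, f + Y θhat⟫ + a * ⟪Y.adjoint z, θ - θhat⟫ - a * ⟪z, w⟫ := by
    rw [ContinuousLinearMap.adjoint_inner_left, map_sub]
    simp only [inner_sub_right, inner_add_right]
    ring
  linarith [neg_abs_le (a * ⟪Y.adjoint z, θ - θhat⟫), le_abs_self (a * ⟪z, w⟫)]

theorem robust_input_term_le (u v Z : U) {ξ ξhat η : ℝ} (hξ : |ξ - ξhat| ≤ η) :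
    -2 * ⟪u, v⟫ - 2 * ξhat * ⟪u, Z⟫ - 2 * |⟪u, Z⟫| * η ≤ -2 * ⟪u, v + ξ • Z⟫ := by
  have hZ : (ξ - ξhat) * ⟪u, Z⟫ ≤ |⟪u, Z⟫| * η :=
    calc (ξ - ξhat) * ⟪u, Z⟫ ≤ |(ξ - ξhat) * ⟪u, Z⟫| := le_abs_self _
      _ = |⟪u, Z⟫| * |ξ - ξhat| := by rw [abs_mul, mul_comm]
      _ ≤ |⟪u, Z⟫| * η := by gcongr
  rw [inner_add_right, real_inner_smul_right]
  linarith

end RobustBounds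

theorem input_constraint_forward_invariance_general (n m p : ℕ)
    (c ℓ ε ν η ρv : ℝ)
    (hc : c > 0) (hε : ε > 0)
    (α : ℝ → ℝ) (hα_mono : Monotone α) (hα0 : α 0 = 0)
    (ζ : ℝ → EuclideanSpace ℝ (Fin n)) (u : ℝ → EuclideanSpace ℝ (Fin m))
    (F w : ℝ → EuclideanSpace ℝ (Fin n))
    (Y : ℝ → (EuclideanSpace ℝ (Fin p) →L[ℝ] EuclideanSpace ℝ (Fin n)))
    (Z v : ℝ → EuclideanSpace ℝ (Fin m))
    (θhat : ℝ → EuclideanSpace ℝ (Fin p)) (ξhat : ℝ → ℝ)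
    (θ : EuclideanSpace ℝ (Fin p)) (ξ : ℝ)
    (hζ' : ∀ t ≥ (0:ℝ), HasDerivAt ζ (F t + Y t θ - w t) t)
    (hu' : ∀ t ≥ (0:ℝ), HasDerivAt u (v t + ξ • Z t) t)
    (hθ : ∀ t ≥ (0:ℝ), ‖θ - θhat t‖ ≤ ν)
    (hξ : ∀ t ≥ (0:ℝ), |ξ - ξhat t| ≤ η)
    (hw : ∀ t ≥ (0:ℝ), ‖w t‖ ≤ ρv)
    (hadm : ∀ t ≥ (0:ℝ),
      (-8 * kappa n c ℓ ε (ζ t) * (‖ζ t‖ ^ 2 - ℓ ^ 2) /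
          ((‖ζ t‖ ^ 2 - ℓ ^ 2) ^ 2 + ε) ^ 2) * ⟪ζ t, F t + Y t (θhat t)⟫
        - |(-8 * kappa n c ℓ ε (ζ t) * (‖ζ t‖ ^ 2 - ℓ ^ 2) /
            ((‖ζ t‖ ^ 2 - ℓ ^ 2) ^ 2 + ε) ^ 2)| *
            (‖(ContinuousLinearMap.adjoint (Y t)) (ζ t)‖ * ν + ‖ζ t‖ * ρv)
        - 2 * ⟪u t, v t⟫ - 2 * ξhat t * ⟪u t, Z t⟫ - 2 * |⟪u t, Z t⟫| * η
        + α (kappa n c ℓ ε (ζ t) ^ 2 - ‖u t‖ ^ 2) ≥ 0)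
    (h0 : kappa n c ℓ ε (ζ 0) ^ 2 - ‖u 0‖ ^ 2 ≥ 0) :
    ∀ t ≥ (0:ℝ), ‖u t‖ ≤ kappa n c ℓ ε (ζ t) := by
  have hcbf : ∀ t ≥ (0:ℝ), 0 ≤ kappa n c ℓ ε (ζ t) ^ 2 - ‖u t‖ ^ 2 :=
    nonneg_of_hasDerivAt_add_comp_nonneg hα_mono hα0
      (fun t ht => ((hζ' t ht).kappa_sq hε).sub (hu' t ht).norm_sq)
      (fun t ht => by
        linarith [hadm t ht, robust_state_term_le
            (-8 * kappa n c ℓ ε (ζ t) * (‖ζ t‖ ^ 2 - ℓ ^ 2) / ((‖ζ t‖ ^ 2 - ℓ ^ 2) ^ 2 + ε) ^ 2)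
            (ζ t) (F t) (w t) (Y t) (hθ t ht) (hw t ht),
          robust_input_term_le (u t) (v t) (Z t) (hξ t ht)])
      h0
  intro t ht
  exact le_of_sq_le_sq (by linarith [hcbf t ht]) (kappa_pos hc.le hε _).le

/-- Input-constraint CBF lemma (Lemma 2): along trajectories of the augmented
system, if the robust admissibility condition holds for all `t ≥ 0` and the
input-constrained CBF `h_u = κ(ζ)² - ‖u‖²` is initially nonnegative, then
`‖u(t)‖ ≤ κ(ζ(t))` for all `t ≥ 0`. -/
theorem input_constraint_forward_invariance (n m p : ℕ)
    (c ℓ ε ν η ρv : ℝ)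
    (hc : c > 0) (hℓ : ℓ > 0) (hε : ε > 0)
    (hν : 0 ≤ ν) (hη : 0 ≤ η) (hρv : 0 ≤ ρv)
    (α : ℝ → ℝ) (hα_lip : LocallyLipschitz α) (hα_mono : Monotone α) (hα0 : α 0 = 0)
    (ζ : ℝ → EuclideanSpace ℝ (Fin n)) (u : ℝ → EuclideanSpace ℝ (Fin m))
    (F w : ℝ → EuclideanSpace ℝ (Fin n))
    (Y : ℝ → (EuclideanSpace ℝ (Fin p) →L[ℝ] EuclideanSpace ℝ (Fin n)))
    (Z v : ℝ → EuclideanSpace ℝ (Fin m))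
    (θhat : ℝ → EuclideanSpace ℝ (Fin p)) (ξhat : ℝ → ℝ)
    (θ : EuclideanSpace ℝ (Fin p)) (ξ : ℝ)
    (hζ' : ∀ t ≥ (0:ℝ), HasDerivAt ζ (F t + Y t θ - w t) t)
    (hu' : ∀ t ≥ (0:ℝ), HasDerivAt u (v t + ξ • Z t) t)
    (hθ : ∀ t ≥ (0:ℝ), ‖θ - θhat t‖ ≤ ν)
    (hξ : ∀ t ≥ (0:ℝ), |ξ - ξhat t| ≤ η)
    (hw : ∀ t ≥ (0:ℝ), ‖w t‖ ≤ ρv)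
    (hadm : ∀ t ≥ (0:ℝ),
      (-8 * kappa n c ℓ ε (ζ t) * (‖ζ t‖ ^ 2 - ℓ ^ 2) /
          ((‖ζ t‖ ^ 2 - ℓ ^ 2) ^ 2 + ε) ^ 2) * ⟪ζ t, F t + Y t (θhat t)⟫
        - |(-8 * kappa n c ℓ ε (ζ t) * (‖ζ t‖ ^ 2 - ℓ ^ 2) /
            ((‖ζ t‖ ^ 2 - ℓ ^ 2) ^ 2 + ε) ^ 2)| *
            (‖(ContinuousLinearMap.adjoint (Y t)) (ζ t)‖ * ν + ‖ζ t‖ * ρv)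
        - 2 * ⟪u t, v t⟫ - 2 * ξhat t * ⟪u t, Z t⟫ - 2 * |⟪u t, Z t⟫| * η
        + α (kappa n c ℓ ε (ζ t) ^ 2 - ‖u t‖ ^ 2) ≥ 0)
    (h0 : kappa n c ℓ ε (ζ 0) ^ 2 - ‖u 0‖ ^ 2 ≥ 0) :
    ∀ t ≥ (0:ℝ), ‖u t‖ ≤ kappa n c ℓ ε (ζ t) :=
  input_constraint_forward_invariance_general n m p c ℓ ε ν η ρv hc hε α hα_mono hα0 ζ u F w Y Z v
    θhat ξhat θ ξ hζ' hu' hθ hξ hw hadm h0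
end

section
/- Let n, m, p ∈ ℕ, constants R > 0, ι > 0, and bounds ν, η, ρ_v, ρ_a ≥ 0; let α : ℝ → ℝ be locally Lipschitz, nondecreasing, with α(0) = 0. Suppose ζ : ℝ → ℝⁿ is twice differentiable on [0,∞) and there are functions F, D, b, G, w₁, w₂ : ℝ → ℝⁿ, Y, Ẏ : ℝ → (ℝᵖ → ℝⁿ linear), θ̂ : ℝ → ℝᵖ, ξ̂ : ℝ → ℝ and constants θ ∈ ℝᵖ, ξ ∈ ℝ such that for all t ≥ 0: ζ'(t) = F(t) + Y(t)θ − w₁(t), ζ''(t) = D(t) + Ẏ(t)θ + ξ·b(t) + G(t) − w₂(t), ‖θ − θ̂(t)‖ ≤ ν, |ξ − ξ̂(t)| ≤ η, ‖w₁(t)‖ ≤ ρ_v, ‖w₂(t)‖ ≤ ρ_a, and −2‖ζ'(t)‖² − 2⟪ζ(t), D(t)⟫ − 2⟪ζ(t), Ẏ(t)θ̂(t)⟫ − 2‖Ẏ(t)*ζ(t)‖·ν − 2‖ζ(t)‖·ρ_a − 2ξ̂(t)·⟪ζ(t), b(t)⟫ − 2|⟪ζ(t), b(t)⟫|·η − 2⟪ζ(t),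 G(t)⟫ − ι·(2⟪ζ(t), F(t)⟫ + 2⟪ζ(t), Y(t)θ̂(t)⟫) − 2ι·‖Y(t)*ζ(t)‖·ν − 2ι·‖ζ(t)‖·ρ_v + α(−2⟪ζ(t), ζ'(t)⟫ + ι·(R² − ‖ζ(t)‖²)) ≥ 0. If R² − ‖ζ(0)‖² ≥ 0 and −2⟪ζ(0), ζ'(0)⟫ + ι·(R² − ‖ζ(0)‖²) ≥ 0, then ‖ζ(t)‖ ≤ R for all t ≥ 0. -/
/-!
Write `h = R² - ‖ζ‖²` and `ψ = ḣ + ι h`. Cauchy–Schwarz against the parameter errors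
`θ - θ̂`, `ξ - ξ̂` and the target's velocity and acceleration shows that the robust
admissibility condition forces the true dynamics to satisfy `ψ̇ + α(ψ) ≥ 0`. Since `α` is
monotone with `α 0 = 0`, `ψ̇ ≥ 0` wherever `ψ ≤ 0`, so `ψ` stays nonnegative; then `ḣ ≥ 0`
wherever `h ≤ 0`, so `h` stays nonnegative as well.
-/

open scoped RealInnerProductSpace
open Set

theorem nonneg_of_hasDerivAt_of_deriv_nonneg_of_nonpos {y y' : ℝ → ℝ} {a : ℝ}
    (hy : ∀ t ≥ a, HasDerivAt y (y' t) t) (ha : 0 ≤ y a)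
    (hy' : ∀ t ≥ a, y t ≤ 0 → 0 ≤ y' t) : ∀ t ≥ a, 0 ≤ y t := by
  intro t ht
  -- Fence `-y` from above by the lines `δ (1 + (s - a))`, which `-y` cannot cross, and let `δ → 0`.
  have hfence : ∀ δ > 0, ∀ s ∈ Icc a t, -y s ≤ δ * (1 + (s - a)) := fun δ hδ =>
    image_le_of_deriv_right_lt_deriv_boundary (f' := fun s => -y' s) (B' := fun _ => δ)
      (fun s hs => (hy s hs.1).neg.continuousAt.continuousWithinAt)
      (fun s hs => (hy s hs.1).neg.hasDerivWithinAt)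
      (by simp only [Pi.neg_apply, sub_self, add_zero, mul_one]; linarith)
      (fun s => by simpa using (((hasDerivAt_id s).sub_const a).const_add 1).const_mul δ)
      (fun s hs hys => by
        rw [Pi.neg_apply] at hys
        have hpos : 0 < δ * (1 + (s - a)) := mul_pos hδ (by linarith [hs.1])
        linarith [hy' s hs.1 (by linarith)])
  refine neg_nonpos.mp (le_of_forall_pos_le_add fun ε hε => ?_)
  have hden : 0 < 1 + (t - a) := by linarith
  have := hfence (ε / (1 + (t - a))) (div_pos hε hden) t ⟨ht, le_rfl⟩
  rw [div_mul_cancel₀ ε hden.ne'] at this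
  linarith

theorem nonneg_of_hocbf {h h' ψ' α : ℝ → ℝ} {ι a : ℝ} (hι : 0 ≤ ι)
    (hα : Monotone α) (hα0 : α 0 = 0)
    (hh : ∀ t ≥ a, HasDerivAt h (h' t) t)
    (hψ : ∀ t ≥ a, HasDerivAt (fun s => h' s + ι * h s) (ψ' t) t)
    (hcond : ∀ t ≥ a, 0 ≤ ψ' t + α (h' t + ι * h t))
    (h0 : 0 ≤ h a) (hψ0 : 0 ≤ h' a + ι * h a) : ∀ t ≥ a, 0 ≤ h t := by
  have hψnn := nonneg_of_hasDerivAt_of_deriv_nonneg_of_nonpos hψ hψ0 fun t ht hψt => by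
    linarith [hcond t ht, hα0 ▸ hα hψt]
  exact nonneg_of_hasDerivAt_of_deriv_nonneg_of_nonpos hh h0 fun t ht hht => by
    nlinarith [hψnn t ht]

section RobustAdmissibility

variable {E P : Type*} [NormedAddCommGroup E] [InnerProductSpace ℝ E]
  [NormedAddCommGroup P] [InnerProductSpace ℝ P]

theorem neg_inner_le_norm_mul (z : E) {w : E} {ρ : ℝ} (hw : ‖w‖ ≤ ρ) : -⟪z, w⟫ ≤ ‖z‖ * ρ :=
  calc -⟪z, w⟫ ≤ |⟪z, w⟫| := neg_le_abs _
    _ ≤ ‖z‖ * ‖w‖ := abs_real_inner_le_norm _ _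
    _ ≤ ‖z‖ * ρ := by gcongr

variable [CompleteSpace E] [CompleteSpace P]

theorem inner_apply_le_add_norm_adjoint_mul (A : P →L[ℝ] E) (z : E) {θ θhat : P} {ν : ℝ}
    (hθ : ‖θ - θhat‖ ≤ ν) :
    ⟪z, A θ⟫ ≤ ⟪z, A θhat⟫ + ‖ContinuousLinearMap.adjoint A z‖ * ν :=
  calc ⟪z, A θ⟫ = ⟪z, A θhat⟫ + ⟪ContinuousLinearMap.adjoint A z, θ - θhat⟫ := by
        rw [ContinuousLinearMap.adjoint_inner_left, map_sub, inner_sub_right]; ring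
    _ ≤ ⟪z, A θhat⟫ + ‖ContinuousLinearMap.adjoint A z‖ * ‖θ - θhat‖ := by
        gcongr; exact real_inner_le_norm _ _
    _ ≤ ⟪z, A θhat⟫ + ‖ContinuousLinearMap.adjoint A z‖ * ν := by gcongr

theorem hocbf_condition_of_robust_admissible {z dz F D b G w₁ w₂ : E} {Y Ydot : P →L[ℝ] E}
    {θ θhat : P} {ξ ξhat ι ν η ρv ρa a : ℝ} (hι : 0 ≤ ι)
    (hdz : dz = F + Y θ - w₁) (hθ : ‖θ - θhat‖ ≤ ν) (hξ : |ξ - ξhat| ≤ η)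
    (hw₁ : ‖w₁‖ ≤ ρv) (hw₂ : ‖w₂‖ ≤ ρa)
    (hadm : -2 * ‖dz‖ ^ 2 - 2 * ⟪z, D⟫ - 2 * ⟪z, Ydot θhat⟫
        - 2 * ‖(ContinuousLinearMap.adjoint Ydot) z‖ * ν - 2 * ‖z‖ * ρa
        - 2 * ξhat * ⟪z, b⟫ - 2 * |⟪z, b⟫| * η - 2 * ⟪z, G⟫
        - ι * (2 * ⟪z, F⟫ + 2 * ⟪z, Y θhat⟫)
        - 2 * ι * ‖(ContinuousLinearMap.adjoint Y) z‖ * ν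
        - 2 * ι * ‖z‖ * ρv + a ≥ 0) :
    0 ≤ -2 * (⟪z, D + Ydot θ + ξ • b + G - w₂⟫ + ⟪dz, dz⟫) + ι * (-2 * ⟪z, dz⟫) + a := by
  have hξb : ξ * ⟪z, b⟫ ≤ ξhat * ⟪z, b⟫ + |⟪z, b⟫| * η :=
    calc ξ * ⟪z, b⟫ = ξhat * ⟪z, b⟫ + (ξ - ξhat) * ⟪z, b⟫ := by ring
      _ ≤ ξhat * ⟪z, b⟫ + |⟪z, b⟫| * |ξ - ξhat| := by
          rw [mul_comm |⟪z, b⟫|, ← abs_mul]; gcongr; exact le_abs_self _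
      _ ≤ ξhat * ⟪z, b⟫ + |⟪z, b⟫| * η := by gcongr
  have hvel : ⟪z, dz⟫ ≤ ⟪z, F⟫ + ⟪z, Y θhat⟫
      + ‖ContinuousLinearMap.adjoint Y z‖ * ν + ‖z‖ * ρv := by
    rw [hdz, inner_sub_right, inner_add_right]
    linarith [inner_apply_le_add_norm_adjoint_mul Y z hθ, neg_inner_le_norm_mul z hw₁]
  rw [inner_sub_right, inner_add_right, inner_add_right, inner_add_right,
    real_inner_smul_right, real_inner_self_eq_norm_sq]
  linarith [inner_apply_le_add_norm_adjoint_mul Ydot z hθ, neg_inner_le_norm_mul z hw₂,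
    mul_le_mul_of_nonneg_left hvel hι]

end RobustAdmissibility

theorem sensing_range_forward_invariance_general (n p : ℕ)
    (R ι ν η ρv ρa : ℝ)
    (hR : R > 0) (hι : ι > 0)
    (α : ℝ → ℝ) (hα_mono : Monotone α) (hα0 : α 0 = 0)
    (ζ dζ : ℝ → EuclideanSpace ℝ (Fin n))
    (F D b G w₁ w₂ : ℝ → EuclideanSpace ℝ (Fin n))
    (Y Ydot : ℝ → (EuclideanSpace ℝ (Fin p) →L[ℝ] EuclideanSpace ℝ (Fin n)))
    (θhat : ℝ → EuclideanSpace ℝ (Fin p)) (ξhat : ℝ → ℝ)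
    (θ : EuclideanSpace ℝ (Fin p)) (ξ : ℝ)
    (hζ' : ∀ t ≥ (0:ℝ), HasDerivAt ζ (dζ t) t)
    (hζ'eq : ∀ t ≥ (0:ℝ), dζ t = F t + Y t θ - w₁ t)
    (hζ'' : ∀ t ≥ (0:ℝ), HasDerivAt dζ (D t + Ydot t θ + ξ • b t + G t - w₂ t) t)
    (hθ : ∀ t ≥ (0:ℝ), ‖θ - θhat t‖ ≤ ν)
    (hξ : ∀ t ≥ (0:ℝ), |ξ - ξhat t| ≤ η)
    (hw₁ : ∀ t ≥ (0:ℝ), ‖w₁ t‖ ≤ ρv)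
    (hw₂ : ∀ t ≥ (0:ℝ), ‖w₂ t‖ ≤ ρa)
    (hadm : ∀ t ≥ (0:ℝ),
      -2 * ‖dζ t‖ ^ 2 - 2 * ⟪ζ t, D t⟫ - 2 * ⟪ζ t, Ydot t (θhat t)⟫
        - 2 * ‖(ContinuousLinearMap.adjoint (Ydot t)) (ζ t)‖ * ν - 2 * ‖ζ t‖ * ρa
        - 2 * ξhat t * ⟪ζ t, b t⟫ - 2 * |⟪ζ t, b t⟫| * η - 2 * ⟪ζ t, G t⟫
        - ι * (2 * ⟪ζ t, F t⟫ + 2 * ⟪ζ t, Y t (θhat t)⟫)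
        - 2 * ι * ‖(ContinuousLinearMap.adjoint (Y t)) (ζ t)‖ * ν
        - 2 * ι * ‖ζ t‖ * ρv
        + α (-2 * ⟪ζ t, dζ t⟫ + ι * (R ^ 2 - ‖ζ t‖ ^ 2)) ≥ 0)
    (h0 : R ^ 2 - ‖ζ 0‖ ^ 2 ≥ 0)
    (h0' : -2 * ⟪ζ 0, dζ 0⟫ + ι * (R ^ 2 - ‖ζ 0‖ ^ 2) ≥ 0) :
    ∀ t ≥ (0:ℝ), ‖ζ t‖ ≤ R := by
  have hh : ∀ t ≥ (0:ℝ), HasDerivAt (fun s => R ^ 2 - ‖ζ s‖ ^ 2) (-2 * ⟪ζ t, dζ t⟫) t :=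
    fun t ht => by simpa using (hζ' t ht).norm_sq.const_sub (R ^ 2)
  have hsafe := nonneg_of_hocbf hι.le hα_mono hα0 hh
    (fun t ht => (((hζ' t ht).inner ℝ (hζ'' t ht)).const_mul (-2)).add ((hh t ht).const_mul ι))
    (fun t ht => hocbf_condition_of_robust_admissible hι.le (hζ'eq t ht) (hθ t ht) (hξ t ht)
      (hw₁ t ht) (hw₂ t ht) (hadm t ht))
    h0 h0'
  intro t ht
  exact (sq_le_sq₀ (norm_nonneg _) hR.le).mp (by linarith [hsafe t ht])

/-- Sensing-range CBF lemma (Lemma 4): with `ζ` the pursuer–target relative position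
and `h_s = R² - ‖ζ‖²` the relative-degree-2 CBF, if the robust admissibility
condition holds for all `t ≥ 0` and `h_s(0) ≥ 0`, `ḣ_s(0) + ι·h_s(0) ≥ 0`, then
`‖ζ(t)‖ ≤ R` for all `t ≥ 0`. -/
theorem sensing_range_forward_invariance (n m p : ℕ)
    (R ι ν η ρv ρa : ℝ)
    (hR : R > 0) (hι : ι > 0)
    (hν : 0 ≤ ν) (hη : 0 ≤ η) (hρv : 0 ≤ ρv) (hρa : 0 ≤ ρa)
    (α : ℝ → ℝ) (hα_lip : LocallyLipschitz α) (hα_mono : Monotone α) (hα0 : α 0 = 0)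
    (ζ dζ : ℝ → EuclideanSpace ℝ (Fin n))
    (F D b G w₁ w₂ : ℝ → EuclideanSpace ℝ (Fin n))
    (Y Ydot : ℝ → (EuclideanSpace ℝ (Fin p) →L[ℝ] EuclideanSpace ℝ (Fin n)))
    (θhat : ℝ → EuclideanSpace ℝ (Fin p)) (ξhat : ℝ → ℝ)
    (θ : EuclideanSpace ℝ (Fin p)) (ξ : ℝ)
    (hζ' : ∀ t ≥ (0:ℝ), HasDerivAt ζ (dζ t) t)
    (hζ'eq : ∀ t ≥ (0:ℝ), dζ t = F t + Y t θ - w₁ t)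
    (hζ'' : ∀ t ≥ (0:ℝ), HasDerivAt dζ (D t + Ydot t θ + ξ • b t + G t - w₂ t) t)
    (hθ : ∀ t ≥ (0:ℝ), ‖θ - θhat t‖ ≤ ν)
    (hξ : ∀ t ≥ (0:ℝ), |ξ - ξhat t| ≤ η)
    (hw₁ : ∀ t ≥ (0:ℝ), ‖w₁ t‖ ≤ ρv)
    (hw₂ : ∀ t ≥ (0:ℝ), ‖w₂ t‖ ≤ ρa)
    (hadm : ∀ t ≥ (0:ℝ),
      -2 * ‖dζ t‖ ^ 2 - 2 * ⟪ζ t, D t⟫ - 2 * ⟪ζ t, Ydot t (θhat t)⟫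
        - 2 * ‖(ContinuousLinearMap.adjoint (Ydot t)) (ζ t)‖ * ν - 2 * ‖ζ t‖ * ρa
        - 2 * ξhat t * ⟪ζ t, b t⟫ - 2 * |⟪ζ t, b t⟫| * η - 2 * ⟪ζ t, G t⟫
        - ι * (2 * ⟪ζ t, F t⟫ + 2 * ⟪ζ t, Y t (θhat t)⟫)
        - 2 * ι * ‖(ContinuousLinearMap.adjoint (Y t)) (ζ t)‖ * ν
        - 2 * ι * ‖ζ t‖ * ρv
        + α (-2 * ⟪ζ t, dζ t⟫ + ι * (R ^ 2 - ‖ζ t‖ ^ 2)) ≥ 0)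
    (h0 : R ^ 2 - ‖ζ 0‖ ^ 2 ≥ 0)
    (h0' : -2 * ⟪ζ 0, dζ 0⟫ + ι * (R ^ 2 - ‖ζ 0‖ ^ 2) ≥ 0) :
    ∀ t ≥ (0:ℝ), ‖ζ t‖ ≤ R :=
  sensing_range_forward_invariance_general n p R ι ν η ρv ρa hR hι α hα_mono hα0 ζ dζ F D b G w₁ w₂
    Y Ydot θhat ξhat θ ξ hζ' hζ'eq hζ'' hθ hξ hw₁ hw₂ hadm h0 h0'
end

section
/- Let H be a real Hilbert space and let δ > 0, B > 0. The map Φ : {(w, π, b) ∈ H × H × ℝ : ‖w‖ ≥ δ, ‖π‖ ≤ B, |b| ≤ B} → H defined by Φ(w, π, b) = π + (max(0, b − ⟪w, π⟫)/‖w‖²)·w is Lipschitz continuous on its domain. -/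
open scoped RealInnerProductSpace NNReal

/-! Dividing the constraint `⟪w, v⟫ ≥ b` by `‖w‖` gives
`Φ(w, π, b) = π + max(0, β - ⟪n, π⟫) • n` with unit normal `n = w / ‖w‖` and offset
`β = b / ‖w‖`. Since `‖w‖ ≥ δ`, both `n` and `1 / ‖w‖` are bounded Lipschitz functions of `w` on the
domain, and sums, maxima and bounded bilinear images of bounded Lipschitz functions are again
bounded Lipschitz. Normalizing first is what makes this work: `⟪w, π⟫` itself is not Lipschitz,
as `w` ranges over an unbounded set. -/

def BoundedLipschitzOn {α E : Type*} [PseudoMetricSpace α] [SeminormedAddCommGroup E]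
    (s : Set α) (f : α → E) : Prop :=
  (∃ K, LipschitzOnWith K f s) ∧ ∃ M : ℝ≥0, ∀ x ∈ s, ‖f x‖ ≤ M

namespace BoundedLipschitzOn

variable {α E F G : Type*} [PseudoMetricSpace α] [SeminormedAddCommGroup E]
  [SeminormedAddCommGroup F] [SeminormedAddCommGroup G] {s : Set α}

theorem add {f g : α → E} (hf : BoundedLipschitzOn s f) (hg : BoundedLipschitzOn s g) :
    BoundedLipschitzOn s fun x => f x + g x := by
  obtain ⟨⟨Kf, hKf⟩, Mf, hMf⟩ := hf
  obtain ⟨⟨Kg, hKg⟩, Mg, hMg⟩ := hg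
  refine ⟨⟨_, hKf.add hKg⟩, Mf + Mg, fun x hx => ?_⟩
  push_cast
  exact (norm_add_le _ _).trans (add_le_add (hMf x hx) (hMg x hx))

theorem sub {f g : α → E} (hf : BoundedLipschitzOn s f) (hg : BoundedLipschitzOn s g) :
    BoundedLipschitzOn s fun x => f x - g x := by
  obtain ⟨⟨Kf, hKf⟩, Mf, hMf⟩ := hf
  obtain ⟨⟨Kg, hKg⟩, Mg, hMg⟩ := hg
  refine ⟨⟨_, hKf.sub hKg⟩, Mf + Mg, fun x hx => ?_⟩
  push_cast
  exact (norm_sub_le _ _).trans (add_le_add (hMf x hx) (hMg x hx))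

theorem const_max {f : α → ℝ} (hf : BoundedLipschitzOn s f) (a : ℝ) :
    BoundedLipschitzOn s fun x => max a (f x) := by
  obtain ⟨⟨K, hK⟩, M, hM⟩ := hf
  refine ⟨⟨_, (LipschitzWith.id.const_max a).comp_lipschitzOnWith hK⟩,
    max ‖a‖₊ M, fun x hx => ?_⟩
  simp only [Real.norm_eq_abs, NNReal.coe_max, coe_nnnorm] at hM ⊢
  exact (abs_max_le_max_abs_abs).trans (max_le_max le_rfl (hM x hx))

theorem clm_apply₂ {𝕜 : Type*} [NontriviallyNormedField 𝕜] [NormedSpace 𝕜 E] [NormedSpace 𝕜 F]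
    [NormedSpace 𝕜 G] {f : α → E} {g : α → F} (L : E →L[𝕜] F →L[𝕜] G)
    (hf : BoundedLipschitzOn s f) (hg : BoundedLipschitzOn s g) :
    BoundedLipschitzOn s fun x => L (f x) (g x) := by
  obtain ⟨⟨Kf, hKf⟩, Mf, hMf⟩ := hf
  obtain ⟨⟨Kg, hKg⟩, Mg, hMg⟩ := hg
  refine ⟨⟨‖L‖₊ * (Mf * Kg + Mg * Kf), LipschitzOnWith.of_dist_le_mul fun x hx y hy => ?_⟩,
    ‖L‖₊ * Mf * Mg, fun x hx => ?_⟩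
  · have hsplit : L (f x) (g x) - L (f y) (g y) = L (f x) (g x - g y) + L (f x - f y) (g y) := by
      simp only [map_sub, sub_apply]; abel
    rw [dist_eq_norm, hsplit]
    push_cast
    calc ‖L (f x) (g x - g y) + L (f x - f y) (g y)‖
        ≤ ‖L‖ * ‖f x‖ * ‖g x - g y‖ + ‖L‖ * ‖f x - f y‖ * ‖g y‖ :=
          (norm_add_le _ _).trans (add_le_add (L.le_opNorm₂ _ _) (L.le_opNorm₂ _ _))
      _ ≤ ‖L‖ * Mf * (Kg * dist x y) + ‖L‖ * (Kf * dist x y) * Mg := by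
          rw [← dist_eq_norm, ← dist_eq_norm]
          gcongr
          exacts [hMf x hx, hKg.dist_le_mul x hx y hy, hKf.dist_le_mul x hx y hy, hMg y hy]
      _ = ‖L‖ * (Mf * Kg + Mg * Kf) * dist x y := by ring
  · push_cast
    calc ‖L (f x) (g x)‖ ≤ ‖L‖ * ‖f x‖ * ‖g x‖ := L.le_opNorm₂ _ _
      _ ≤ ‖L‖ * Mf * Mg := by gcongr; exacts [hMf x hx, hMg x hx]

end BoundedLipschitzOn

theorem lipschitzOnWith_inv_norm {E : Type*} [SeminormedAddCommGroup E] {δ : ℝ≥0} (hδ : 0 < δ) :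
    LipschitzOnWith (δ ^ 2)⁻¹ (fun x : E => ‖x‖⁻¹) {x | δ ≤ ‖x‖} := by
  refine LipschitzOnWith.of_dist_le_mul fun x (hx : (δ : ℝ) ≤ ‖x‖) y (hy : (δ : ℝ) ≤ ‖y‖) => ?_
  have hδ' : (0 : ℝ) < δ := hδ
  have hx0 : 0 < ‖x‖ := hδ'.trans_le hx
  have hy0 : 0 < ‖y‖ := hδ'.trans_le hy
  rw [Real.dist_eq, dist_eq_norm, inv_sub_inv hx0.ne' hy0.ne', abs_div, abs_sub_comm,
    abs_of_pos (mul_pos hx0 hy0), div_le_iff₀ (mul_pos hx0 hy0)]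
  push_cast
  calc |‖x‖ - ‖y‖| ≤ ‖x - y‖ := abs_norm_sub_norm_le x y
    _ = (δ ^ 2 : ℝ)⁻¹ * ‖x - y‖ * (δ * δ) := by field_simp
    _ ≤ (δ ^ 2 : ℝ)⁻¹ * ‖x - y‖ * (‖x‖ * ‖y‖) := by gcongr

section

variable {V : Type*} [NormedAddCommGroup V] [NormedSpace ℝ V]

theorem norm_normalize_le_one (x : V) : ‖NormedSpace.normalize x‖ ≤ 1 := by
  by_cases hx : x = 0
  · simp [hx]
  · exact (NormedSpace.norm_normalize hx).le

theorem lipschitzOnWith_normalize {δ : ℝ≥0} (hδ : 0 < δ) :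
    LipschitzOnWith (2 / δ) (NormedSpace.normalize : V → V) {x | δ ≤ ‖x‖} := by
  refine LipschitzOnWith.of_dist_le_mul fun x (hx : (δ : ℝ) ≤ ‖x‖) y (hy : (δ : ℝ) ≤ ‖y‖) => ?_
  have hδ' : (0 : ℝ) < δ := hδ
  have hx0 : 0 < ‖x‖ := hδ'.trans_le hx
  have hy0 : 0 < ‖y‖ := hδ'.trans_le hy
  have hsplit : NormedSpace.normalize x - NormedSpace.normalize y
      = ‖x‖⁻¹ • (x - y) + (‖x‖⁻¹ - ‖y‖⁻¹) • y := by
    simp only [NormedSpace.normalize, smul_sub, sub_smul]; abel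
  have hrescale : ‖(‖x‖⁻¹ - ‖y‖⁻¹) • y‖ ≤ ‖x‖⁻¹ * ‖x - y‖ := by
    rw [norm_smul, Real.norm_eq_abs, inv_sub_inv hx0.ne' hy0.ne', abs_div,
      abs_of_pos (mul_pos hx0 hy0), abs_sub_comm]
    calc |‖x‖ - ‖y‖| / (‖x‖ * ‖y‖) * ‖y‖ = ‖x‖⁻¹ * |‖x‖ - ‖y‖| := by field_simp
      _ ≤ ‖x‖⁻¹ * ‖x - y‖ := by gcongr; exact abs_norm_sub_norm_le x y
  rw [dist_eq_norm, dist_eq_norm, hsplit]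
  push_cast
  calc ‖‖x‖⁻¹ • (x - y) + (‖x‖⁻¹ - ‖y‖⁻¹) • y‖
      ≤ ‖x‖⁻¹ * ‖x - y‖ + ‖x‖⁻¹ * ‖x - y‖ := by
        refine (norm_add_le _ _).trans (add_le_add ?_ hrescale)
        rw [norm_smul, norm_inv, norm_norm]
    _ = 2 / ‖x‖ * ‖x - y‖ := by ring
    _ ≤ 2 / δ * ‖x - y‖ := by gcongr

end

theorem max_zero_sub_inner_div_norm_sq_smul {H : Type*} [NormedAddCommGroup H]
    [InnerProductSpace ℝ H] (w π : H) (b : ℝ) :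
    (max 0 (b - ⟪w, π⟫) / ‖w‖ ^ 2) • w
      = max 0 (b * ‖w‖⁻¹ - ⟪NormedSpace.normalize w, π⟫) • NormedSpace.normalize w := by
  by_cases hw : w = 0
  · simp [hw]
  have hw0 : 0 < ‖w‖ := norm_pos_iff.mpr hw
  have hslack : b * ‖w‖⁻¹ - ⟪NormedSpace.normalize w, π⟫ = ‖w‖⁻¹ * (b - ⟪w, π⟫) := by
    rw [NormedSpace.normalize, real_inner_smul_left]; ring
  have hscale : max 0 (‖w‖⁻¹ * (b - ⟪w, π⟫)) = ‖w‖⁻¹ * max 0 (b - ⟪w, π⟫) := by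
    rw [mul_max_of_nonneg _ _ (inv_nonneg.mpr hw0.le), mul_zero]
  rw [hslack, hscale, NormedSpace.normalize, smul_smul]
  congr 1
  field_simp

theorem cbf_qp_solution_lipschitz_general {H : Type*} [NormedAddCommGroup H]
    [InnerProductSpace ℝ H] (δ B : ℝ) (hδ : δ > 0) :
    ∃ K : ℝ≥0, LipschitzOnWith K
      (fun q : H × H × ℝ => q.2.1 + (max 0 (q.2.2 - ⟪q.1, q.2.1⟫) / ‖q.1‖ ^ 2) • q.1)
      {q : H × H × ℝ | δ ≤ ‖q.1‖ ∧ ‖q.2.1‖ ≤ B ∧ |q.2.2| ≤ B} := by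
  lift δ to ℝ≥0 using hδ.le
  set S := {q : H × H × ℝ | (δ : ℝ) ≤ ‖q.1‖ ∧ ‖q.2.1‖ ≤ B ∧ |q.2.2| ≤ B}
  have hw : LipschitzOnWith 1 (fun q : H × H × ℝ => q.1) S := LipschitzWith.prod_fst.lipschitzOnWith
  have hn : BoundedLipschitzOn S fun q : H × H × ℝ => NormedSpace.normalize q.1 :=
    ⟨⟨_, (lipschitzOnWith_normalize hδ).comp hw fun q hq => hq.1⟩,
      1, fun q _ => norm_normalize_le_one q.1⟩
  have hinv : BoundedLipschitzOn S fun q : H × H × ℝ => ‖q.1‖⁻¹ :=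
    ⟨⟨_, (lipschitzOnWith_inv_norm hδ).comp hw fun q hq => hq.1⟩,
      δ⁻¹, fun q hq => by simpa using inv_anti₀ hδ hq.1⟩
  have hπ : BoundedLipschitzOn S fun q : H × H × ℝ => q.2.1 :=
    ⟨⟨_, (LipschitzWith.prod_fst.comp LipschitzWith.prod_snd).lipschitzOnWith⟩,
      B.toNNReal, fun q hq => hq.2.1.trans B.le_coe_toNNReal⟩
  have hb : BoundedLipschitzOn S fun q : H × H × ℝ => q.2.2 :=
    ⟨⟨_, (LipschitzWith.prod_snd.comp LipschitzWith.prod_snd).lipschitzOnWith⟩,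
      B.toNNReal, fun q hq => hq.2.2.trans B.le_coe_toNNReal⟩
  have hβ : BoundedLipschitzOn S fun q : H × H × ℝ => q.2.2 * ‖q.1‖⁻¹ :=
    hb.clm_apply₂ (.lsmul ℝ ℝ) hinv
  have hι : BoundedLipschitzOn S fun q : H × H × ℝ => ⟪NormedSpace.normalize q.1, q.2.1⟫ :=
    hn.clm_apply₂ (innerSL ℝ) hπ
  obtain ⟨⟨K, hK⟩, -⟩ : BoundedLipschitzOn S fun q : H × H × ℝ =>
      q.2.1 + max 0 (q.2.2 * ‖q.1‖⁻¹ - ⟪NormedSpace.normalize q.1, q.2.1⟫) •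
        NormedSpace.normalize q.1 :=
    hπ.add (((hβ.sub hι).const_max 0).clm_apply₂ (.lsmul ℝ ℝ) hn)
  refine ⟨K, ?_⟩
  simp only [max_zero_sub_inner_div_norm_sq_smul]
  exact hK

/-- Lipschitz continuity of the single-constraint CBF-QP solution
`Φ(w, π, b) = π + (max 0 (b - ⟪w, π⟫)/‖w‖²) • w` on the region where the
constraint direction `w` is bounded away from zero and `π`, `b` are bounded. -/
theorem cbf_qp_solution_lipschitz {H : Type*} [NormedAddCommGroup H]
    [InnerProductSpace ℝ H] (δ B : ℝ) (hδ : δ > 0) (hB : B > 0) :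
    ∃ K : ℝ≥0, LipschitzOnWith K
      (fun q : H × H × ℝ => q.2.1 + (max 0 (q.2.2 - ⟪q.1, q.2.1⟫) / ‖q.1‖ ^ 2) • q.1)
      {q : H × H × ℝ | δ ≤ ‖q.1‖ ∧ ‖q.2.1‖ ≤ B ∧ |q.2.2| ≤ B} :=
  cbf_qp_solution_lipschitz_general δ B hδ
end
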